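/- arXiv:2506.18354 — 8 statements merged into one kernel-verified Lean document; each statement's English description precedes it below -/
import Mathlib

section
/- Let x, y, c be points in the Euclidean plane and r > 0 with dist(x,c) > r and dist(y,c) > r. If infDist(c, [x,y]) < r (the point of the segment closest to c lies strictly inside the disk), then the segment [x,y] intersects the circle C(c,r) in exactly two points. -/
/-!
Along the segment, `t ↦ dist (x + t • (y - x)) c ^ 2 - r ^ 2` is a quadratic in `t` with
positive leading coefficient. It is positive at `t = 0` and `t = 1` and negative at the parameter
of a point of the segment inside the disk, so it has exactly two roots, both in `(0, 1)`.
-/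

open Metric Set

theorem exists_quadratic_eq_mul_of_neg {a b c t₀ : ℝ} (ha : 0 < a)
    (h : a * (t₀ * t₀) + b * t₀ + c < 0) :
    ∃ t₁ t₂, t₁ < t₀ ∧ t₀ < t₂ ∧
      ∀ t, a * (t * t) + b * t + c = a * ((t - t₁) * (t - t₂)) := by
  have hd : 0 ≤ discrim a b c := by
    rw [discrim]; nlinarith [sq_nonneg (2 * a * t₀ + b)]
  set s := √(discrim a b c)
  have hs : s * s = b ^ 2 - 4 * a * c := Real.mul_self_sqrt hd
  have hfac : ∀ t, a * (t * t) + b * t + c =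
      a * ((t - (-b - s) / (2 * a)) * (t - (-b + s) / (2 * a))) := by
    intro t
    field_simp
    linear_combination hs
  have hle : (-b - s) / (2 * a) ≤ (-b + s) / (2 * a) := by
    gcongr; linarith [Real.sqrt_nonneg (discrim a b c)]
  have hneg : (t₀ - (-b - s) / (2 * a)) * (t₀ - (-b + s) / (2 * a)) < 0 :=
    neg_of_mul_neg_right (hfac t₀ ▸ h) ha.le
  refine ⟨_, _, ?_, ?_, hfac⟩ <;>
    rcases mul_neg_iff.1 hneg with ⟨h₁, h₂⟩ | ⟨h₁, h₂⟩ <;> linarith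

theorem exists_ne_setOf_quadratic_eq_zero_Icc {q : ℝ → ℝ} {a b c t₀ : ℝ} (ha : 0 < a)
    (hq : ∀ t, q t = a * (t * t) + b * t + c) (h₀ : 0 < q 0) (h₁ : 0 < q 1)
    (ht₀ : t₀ ∈ Icc (0 : ℝ) 1) (hneg : q t₀ < 0) :
    ∃ t₁ t₂, t₁ ≠ t₂ ∧ {t ∈ Icc (0 : ℝ) 1 | q t = 0} = {t₁, t₂} := by
  obtain ⟨t₁, t₂, ht₁, ht₂, hfac⟩ := exists_quadratic_eq_mul_of_neg ha (hq t₀ ▸ hneg)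
  simp only [hq, hfac] at h₀ h₁
  -- `q > 0` at `0` and `1` puts both outside `[t₁, t₂]`, which contains `t₀ ∈ [0, 1]`.
  have h0t₁ : 0 < t₁ := by
    rcases mul_pos_iff.1 (pos_of_mul_pos_right h₀ ha.le) with ⟨h, h'⟩ | ⟨h, h'⟩ <;>
      linarith [ht₀.1]
  have ht₂1 : t₂ < 1 := by
    rcases mul_pos_iff.1 (pos_of_mul_pos_right h₁ ha.le) with ⟨h, h'⟩ | ⟨h, h'⟩ <;>
      linarith [ht₀.2]
  refine ⟨t₁, t₂, by linarith, ?_⟩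
  ext t
  simp only [mem_ofPred_eq, mem_insert_iff, mem_singleton_iff, mem_Icc, hq, hfac,
    mul_eq_zero, ha.ne', false_or, sub_eq_zero]
  constructor
  · exact fun h => h.2
  · rintro (rfl | rfl) <;> refine ⟨⟨?_, ?_⟩, by simp⟩ <;> linarith

variable {E : Type*} [NormedAddCommGroup E] [InnerProductSpace ℝ E]

theorem dist_add_smul_sub_sq (x y c : E) (t : ℝ) :
    dist (x + t • (y - x)) c ^ 2 =
      ‖y - x‖ ^ 2 * (t * t) + 2 * inner ℝ (x - c) (y - x) * t + ‖x - c‖ ^ 2 := by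
  rw [dist_eq_norm, add_sub_right_comm, norm_add_sq_real, inner_smul_right, norm_smul,
    Real.norm_eq_abs, mul_pow, sq_abs]
  ring

theorem segment_inter_sphere_eq_image (x y c : E) {r : ℝ} (hr : 0 ≤ r) :
    segment ℝ x y ∩ sphere c r = (fun t : ℝ => x + t • (y - x)) ''
      {t ∈ Icc (0 : ℝ) 1 | dist (x + t • (y - x)) c ^ 2 - r ^ 2 = 0} := by
  ext p
  simp only [mem_inter_iff, segment_eq_image', mem_image, mem_sep_iff, sub_eq_zero,
    sq_eq_sq₀ dist_nonneg hr, mem_sphere]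
  constructor
  · rintro ⟨⟨t, ht, rfl⟩, hp⟩
    exact ⟨t, ⟨ht, hp⟩, rfl⟩
  · rintro ⟨t, ⟨ht, hp⟩, rfl⟩
    exact ⟨⟨t, ht, rfl⟩, hp⟩

theorem segment_circle_inter_type_two_general
    (x y c : EuclideanSpace ℝ (Fin 2)) (r : ℝ)
    (hx : r < dist x c) (hy : r < dist y c)
    (hinf : Metric.infDist c (segment ℝ x y) < r) :
    ∃ p q : EuclideanSpace ℝ (Fin 2), p ≠ q ∧
      segment ℝ x y ∩ Metric.sphere c r = {p, q} := by
  have hr : 0 ≤ r := infDist_nonneg.trans hinf.le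
  obtain ⟨t₀, ht₀, hpc⟩ : ∃ t₀ ∈ Icc (0 : ℝ) 1, dist (x + t₀ • (y - x)) c < r := by
    obtain ⟨p, hp, hpc⟩ := (infDist_lt_iff ⟨x, left_mem_segment ℝ x y⟩).1 hinf
    rw [segment_eq_image'] at hp
    obtain ⟨t, ht, rfl⟩ := hp
    exact ⟨t, ht, dist_comm c _ ▸ hpc⟩
  have hyx : y - x ≠ 0 := by
    rintro h
    rw [h, smul_zero, add_zero] at hpc
    exact hx.not_gt hpc
  have sq_sub_sq_pos : ∀ {d : ℝ}, r < d → 0 < d ^ 2 - r ^ 2 := fun h =>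
    sub_pos.2 (pow_lt_pow_left₀ h hr two_ne_zero)
  obtain ⟨t₁, t₂, hne, hroots⟩ := exists_ne_setOf_quadratic_eq_zero_Icc
    (q := fun t => dist (x + t • (y - x)) c ^ 2 - r ^ 2) (pow_pos (norm_pos_iff.2 hyx) 2)
    (fun t => by rw [dist_add_smul_sub_sq, add_sub_assoc])
    (by simpa using sq_sub_sq_pos hx) (by simpa using sq_sub_sq_pos hy) ht₀
    (sub_neg.2 (pow_lt_pow_left₀ hpc dist_nonneg two_ne_zero))
  refine ⟨x + t₁ • (y - x), x + t₂ • (y - x), ?_, ?_⟩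
  · rwa [Ne, add_right_inj, smul_left_injective ℝ hyx |>.eq_iff]
  · rw [segment_inter_sphere_eq_image x y c hr, hroots, image_pair]

/-- both endpoints strictly outside, closest point of segment strictly inside:
exactly two intersection points. -/
theorem segment_circle_inter_type_two
    (x y c : EuclideanSpace ℝ (Fin 2)) (r : ℝ) (hr : 0 < r)
    (hx : r < dist x c) (hy : r < dist y c)
    (hinf : Metric.infDist c (segment ℝ x y) < r) :
    ∃ p q : EuclideanSpace ℝ (Fin 2), p ≠ q ∧
      segment ℝ x y ∩ Metric.sphere c r = {p, q} :=
  segment_circle_inter_type_two_general x y c r hx hy hinf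
end

section
/- Let x, y, c be points in the Euclidean plane and r > 0 with dist(x,c) > r and dist(y,c) > r. If infDist(c, [x,y]) = r (the circle is tangent to the segment), then the segment [x,y] intersects the circle C(c,r) in exactly one point. -/
/-- both endpoints strictly outside, circle tangent to the segment:
exactly one intersection point. -/
theorem segment_circle_tangent
    (x y c : EuclideanSpace ℝ (Fin 2)) (r : ℝ) (hr : 0 < r)
    (hx : r < dist x c) (hy : r < dist y c)
    (hinf : Metric.infDist c (segment ℝ x y) = r) :
    ∃ p : EuclideanSpace ℝ (Fin 2),
      segment ℝ x y ∩ Metric.sphere c r = {p} := by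
  have hcpt : IsCompact (segment ℝ x y) := by
    rw [segment_eq_image]
    exact isCompact_Icc.image (by continuity)
  obtain ⟨p, hpmem, hpd⟩ :=
    hcpt.exists_infDist_eq_dist ⟨x, left_mem_segment ℝ x y⟩ c
  have hpr : dist p c = r := by rw [dist_comm]; rw [hinf] at hpd; exact hpd.symm
  refine ⟨p, Set.eq_singleton_iff_unique_mem.mpr ⟨⟨hpmem, hpr⟩, ?_⟩⟩
  rintro q ⟨hqmem, hqr⟩
  by_contra hne
  -- midpoint of p q is in the segment and strictly inside the circle
  have hm : (1/2 : ℝ) • (q + p) ∈ segment ℝ x y := by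
    have := (convex_segment x y) hqmem hpmem (by norm_num : (0:ℝ) ≤ 1/2)
      (by norm_num : (0:ℝ) ≤ 1/2) (by norm_num)
    simpa [smul_add] using this
  have hlt : ‖(1/2 : ℝ) • ((q - c) + (p - c))‖ < ‖q - c‖ := by
    refine (norm_midpoint_lt_iff ?_).2 ?_
    · rw [← dist_eq_norm, ← dist_eq_norm, hqr, hpr]
    · intro h; exact hne (by simpa using sub_left_injective h)
  have hq : ‖q - c‖ = r := by rw [← dist_eq_norm]; exact hqr
  have h2 : (1/2 : ℝ) • ((q - c) + (p - c)) = (1/2 : ℝ) • (q + p) - c := by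
    module
  have hge : r ≤ dist c ((1/2 : ℝ) • (q + p)) := by
    rw [← hinf]; exact Metric.infDist_le_dist_of_mem hm
  rw [hq, h2, ← dist_eq_norm, dist_comm] at hlt
  linarith
end

section
/- Let x ≠ y and c be points in the Euclidean plane and r > 0 with dist(x,c) > r and dist(y,c) > r. Then infDist(c, [x,y]) < r if and only if c lies in the open truncated strip of the segment, i.e., there exists s ∈ (0,1) such that the point p = x + s·(y−x) satisfies ⟨c − p, y − x⟩ = 0 and dist(c, p) < r. -/
open scoped RealInnerProductSpace

private lemma key_pyth (x c v : EuclideanSpace ℝ (Fin 2)) (t s : ℝ)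
    (ht : ⟪c - (x + t • v), v⟫ = 0) :
    ‖c - (x + s • v)‖ ^ 2 = ‖c - (x + t • v)‖ ^ 2 + (t - s) ^ 2 * ‖v‖ ^ 2 := by
  have h1 : c - (x + s • v) = (c - (x + t • v)) + (t - s) • v := by
    rw [sub_smul]; abel
  rw [h1, norm_add_sq_real, real_inner_smul_right, ht, norm_smul]
  simp [Real.norm_eq_abs, mul_pow, sq_abs]


private lemma scalar_main (A B C D W r s t : ℝ) (hW : 0 < W)
    (hkey : B ^ 2 = D ^ 2 + (t - s) ^ 2 * W)
    (hkey0 : A ^ 2 = D ^ 2 + (t - 0) ^ 2 * W)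
    (hkey1 : C ^ 2 = D ^ 2 + (t - 1) ^ 2 * W)
    (hs0 : 0 ≤ s) (hs1 : s ≤ 1) (hB : B < r) (hA : r < A) (hC : r < C)
    (hBnn : 0 ≤ B) (hDnn : 0 ≤ D) (hr : 0 < r) :
    0 < t ∧ t < 1 ∧ D < r := by
  have hb2 : B ^ 2 < r ^ 2 := by nlinarith
  have ha2 : r ^ 2 < A ^ 2 := by nlinarith
  have hc2 : r ^ 2 < C ^ 2 := by nlinarith
  have ht0 : 0 < t := by
    by_contra hcon
    push_neg at hcon
    have h1 : (t - 0) ^ 2 ≤ (t - s) ^ 2 := by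
      nlinarith [mul_nonneg hs0 (neg_nonneg.mpr hcon)]
    have h2 := mul_le_mul_of_nonneg_right h1 hW.le
    linarith
  have ht1 : t < 1 := by
    by_contra hcon
    push_neg at hcon
    have h1 : (t - 1) ^ 2 ≤ (t - s) ^ 2 := by
      nlinarith [mul_nonneg (sub_nonneg.mpr hs1) (by linarith : (0:ℝ) ≤ 2 * t - s - 1)]
    have h2 := mul_le_mul_of_nonneg_right h1 hW.le
    linarith
  have hD2 : D ^ 2 < r ^ 2 := by nlinarith [mul_nonneg (sq_nonneg (t - s)) hW.le]
  refine ⟨ht0, ht1, by nlinarith⟩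

/-- both endpoints strictly outside. The closest point of the segment lies
strictly inside the disk iff the center lies in the open truncated strip of the segment. -/
theorem infDist_lt_iff_in_open_truncated_strip
    (x y c : EuclideanSpace ℝ (Fin 2)) (hxy : x ≠ y) (r : ℝ) (hr : 0 < r)
    (hx : r < dist x c) (hy : r < dist y c) :
    Metric.infDist c (segment ℝ x y) < r ↔
      ∃ s : ℝ, s ∈ Set.Ioo (0 : ℝ) 1 ∧
        ⟪c - (x + s • (y - x)), y - x⟫ = 0 ∧ dist c (x + s • (y - x)) < r := by
  set v : EuclideanSpace ℝ (Fin 2) := y - x with hv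
  have hv0 : v ≠ 0 := sub_ne_zero.mpr (Ne.symm hxy)
  have hV : (0:ℝ) < ‖v‖ ^ 2 := pow_pos (norm_pos_iff.mpr hv0) 2
  set t : ℝ := ⟪c - x, v⟫ / ‖v‖ ^ 2 with htdef
  have ht : ⟪c - (x + t • v), v⟫ = 0 := by
    have h2 : c - (x + t • v) = (c - x) - t • v := by abel
    rw [h2, inner_sub_left, real_inner_smul_left, real_inner_self_eq_norm_sq,
      htdef, div_mul_cancel₀ _ (ne_of_gt hV), sub_self]
  clear_value t
  clear_value v
  clear htdef
  constructor
  · intro h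
    obtain ⟨p, hp, hpd⟩ := (Metric.infDist_lt_iff ⟨x, left_mem_segment ℝ x y⟩).mp h
    rw [segment_eq_image'] at hp
    obtain ⟨s, hs, rfl⟩ := hp
    simp only [← hv] at hpd
    have hkey := key_pyth x c v t s ht
    have hkey0 := key_pyth x c v t 0 ht
    have hkey1 := key_pyth x c v t 1 ht
    have hx0 : x + (0:ℝ) • v = x := by simp
    have hy1 : x + (1:ℝ) • v = y := by simp [hv]
    rw [hx0] at hkey0
    rw [hy1] at hkey1
    have hds : dist c (x + s • v) = ‖c - (x + s • v)‖ := dist_eq_norm _ _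
    have hdx : dist x c = ‖c - x‖ := by rw [dist_comm, dist_eq_norm]
    have hdy : dist y c = ‖c - y‖ := by rw [dist_comm, dist_eq_norm]
    have hnn : (0:ℝ) ≤ ‖c - (x + s • v)‖ := norm_nonneg _
    have hnn0 : (0:ℝ) ≤ ‖c - x‖ := norm_nonneg _
    have hnn1 : (0:ℝ) ≤ ‖c - y‖ := norm_nonneg _
    have hnnt : (0:ℝ) ≤ ‖c - (x + t • v)‖ := norm_nonneg _
    have hpd' : ‖c - (x + s • v)‖ < r := by rw [← hds]; exact hpd
    rw [hdx] at hx
    rw [hdy] at hy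
    obtain ⟨ht0, ht1, hD⟩ := scalar_main (‖c - x‖) (‖c - (x + s • v)‖) (‖c - y‖)
      (‖c - (x + t • v)‖) (‖v‖ ^ 2) r s t hV hkey hkey0 hkey1 hs.1 hs.2 hpd' hx hy hnn hnnt hr
    refine ⟨t, ⟨ht0, ht1⟩, ht, ?_⟩
    rw [dist_eq_norm]
    exact hD
  · rintro ⟨s, hs, _, hd⟩
    have hmem : x + s • v ∈ segment ℝ x y := by
      rw [segment_eq_image']
      exact ⟨s, ⟨le_of_lt hs.1, le_of_lt hs.2⟩, by simp [hv]⟩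
    exact lt_of_le_of_lt (Metric.infDist_le_dist_of_mem hmem) hd
end

section
/- Let x ≠ y be points in the Euclidean plane, r > 0, d = dist(x,y) with 0 < d < 2r, m = (x+y)/2, n a unit vector orthogonal to y − x, and h = sqrt(r² − d²/4). Let T⁺ be the convex hull of the three points x + r·n, y + r·n, and m + h·n. Then T⁺ contains no point that lies in both open disks {p : dist(p,x) < r} and {p : dist(p,y) < r}. -/
open scoped RealInnerProductSpace

/-!
The three vertices of `T⁺`, hence all of `T⁺`, lie in the half-plane `⟪n, q - m⟫ ≥ h`, so
every point `p` of `T⁺` satisfies `dist p m ≥ h`. By Apollonius' theorem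
`dist p x ^ 2 + dist p y ^ 2 = 2 * dist p m ^ 2 + d ^ 2 / 2 ≥ 2 * h ^ 2 + d ^ 2 / 2 ≥ 2 * r ^ 2`
since `h ^ 2 ≥ r ^ 2 - d ^ 2 / 4`, so `p` cannot be at distance `< r` from both `x` and `y`.
-/

section InnerProductSpace

variable {V : Type*} [NormedAddCommGroup V] [InnerProductSpace ℝ V]

theorem le_dist_of_inner_add_le_inner {n p m : V} {h : ℝ} (hn : ‖n‖ = 1)
    (hp : ⟪n, m⟫ + h ≤ ⟪n, p⟫) : h ≤ dist p m :=
  calc h ≤ ⟪n, p - m⟫ := by rw [inner_sub_right]; linarith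
    _ ≤ ‖n‖ * ‖p - m‖ := real_inner_le_norm n (p - m)
    _ = dist p m := by rw [hn, one_mul, dist_eq_norm]

theorem inner_midpoint_eq_left {n x y : V} (hxy : ⟪n, y⟫ = ⟪n, x⟫) :
    ⟪n, midpoint ℝ x y⟫ = ⟪n, x⟫ := by
  rw [midpoint_eq_smul_add, real_inner_smul_right, inner_add_right, hxy, invOf_eq_inv]
  ring

theorem not_dist_lt_and_dist_lt_of_le_dist_midpoint {x y p : V} {r h : ℝ} (hh0 : 0 ≤ h)
    (hh : r ^ 2 - dist x y ^ 2 / 4 ≤ h ^ 2) (hp : h ≤ dist p (midpoint ℝ x y)) :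
    ¬ (dist p x < r ∧ dist p y < r) := by
  rintro ⟨hpx, hpy⟩
  have apollonius :=
    EuclideanGeometry.dist_sq_add_dist_sq_eq_two_mul_dist_midpoint_sq_add_half_dist_sq p x y
  have hpm : h ^ 2 ≤ dist p (midpoint ℝ x y) ^ 2 := pow_le_pow_left₀ hh0 hp 2
  nlinarith [dist_nonneg (x := p) (y := x), dist_nonneg (x := p) (y := y)]

end InnerProductSpace

theorem triangle_avoids_lens_general
    (x y n : EuclideanSpace ℝ (Fin 2)) (r d h : ℝ) (hr : 0 < r)
    (hd : d = dist x y)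
    (hn : ‖n‖ = 1) (hperp : ⟪n, y - x⟫ = 0)
    (hh : h = Real.sqrt (r ^ 2 - d ^ 2 / 4)) :
    ∀ p ∈ convexHull ℝ
        ({x + r • n, y + r • n, (2 : ℝ)⁻¹ • (x + y) + h • n} :
          Set (EuclideanSpace ℝ (Fin 2))),
      ¬ (dist p x < r ∧ dist p y < r) := by
  intro p hp
  have hh0 : 0 ≤ h := hh ▸ Real.sqrt_nonneg _
  have hh_sq : r ^ 2 - d ^ 2 / 4 ≤ h ^ 2 := by rw [hh, Real.sq_sqrt']; exact le_max_left _ _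
  have hhr : h ≤ r := hh ▸ (Real.sqrt_le_left hr.le).mpr (by linarith [sq_nonneg d])
  have hnyx : ⟪n, y⟫ = ⟪n, x⟫ := by rwa [inner_sub_right, sub_eq_zero] at hperp
  have hm : ⟪n, midpoint ℝ x y⟫ = ⟪n, x⟫ := inner_midpoint_eq_left hnyx
  have hnn : ⟪n, n⟫ = 1 := by rw [real_inner_self_eq_norm_sq, hn, one_pow]
  rw [← invOf_eq_inv, ← midpoint_eq_smul_add] at hp
  have hT : p ∈ {q | ⟪n, midpoint ℝ x y⟫ + h ≤ ⟪n, q⟫} := by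
    refine convexHull_min ?_ ?_ hp
    · rintro q (rfl | rfl | rfl) <;>
        simp only [Set.mem_ofPred_eq, inner_add_right, real_inner_smul_right, hnn, hm, hnyx] <;>
        linarith
    · exact convex_halfSpace_ge (f := (⟪n, ·⟫)) (innerₛₗ ℝ n).isLinear _
  exact not_dist_lt_and_dist_lt_of_le_dist_midpoint hh0 (hd ▸ hh_sq)
    (le_dist_of_inner_add_le_inner hn hT)

/-- the triangle T⁺ spanned by x + r·n, y + r·n and m + h·n contains no
point lying in both open disks of radius r around x and y. -/
theorem triangle_avoids_lens
    (x y n : EuclideanSpace ℝ (Fin 2)) (r d h : ℝ) (hr : 0 < r) (hxy : x ≠ y)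
    (hd : d = dist x y) (hd0 : 0 < d) (hd2 : d < 2 * r)
    (hn : ‖n‖ = 1) (hperp : ⟪n, y - x⟫ = 0)
    (hh : h = Real.sqrt (r ^ 2 - d ^ 2 / 4)) :
    ∀ p ∈ convexHull ℝ
        ({x + r • n, y + r • n, (2 : ℝ)⁻¹ • (x + y) + h • n} :
          Set (EuclideanSpace ℝ (Fin 2))),
      ¬ (dist p x < r ∧ dist p y < r) :=
  triangle_avoids_lens_general x y n r d h hr hd hn hperp hh
end

section
/- Let x ≠ y be points in the Euclidean plane, r > 0, d = dist(x,y) with 0 < d < 2r, m = (x+y)/2, n a unit vector orthogonal to y − x, and h = sqrt(r² − d²/4). Let T⁺ be the convex hull of {x + r·n, y + r·n, m + h·n}, let T⁻ be the convex hull of {x − r·n, y − r·n, m − h·n}, and let R be the convex hull of the four points x + r·n, x − r·n, y + r·n, y − r·n (the rectangle of length d and height 2r centered at the segment [x,y]). Then every point p ∈ R with dist(p,x) > r and dist(p,y) > r belongs to T⁺ ∪ T⁻. -/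
set_option maxHeartbeats 1000000

open scoped RealInnerProductSpace

lemma mem_hull3 {E : Type*} [AddCommGroup E] [Module ℝ E] (v1 v2 v3 : E) (l1 l2 l3 : ℝ)
    (h1 : 0 ≤ l1) (h2 : 0 ≤ l2) (h3 : 0 ≤ l3) (hs : l1 + l2 + l3 = 1) :
    l1 • v1 + l2 • v2 + l3 • v3 ∈ convexHull ℝ ({v1, v2, v3} : Set E) := by
  have hmem : ∀ i, (![v1, v2, v3] : Fin 3 → E) i ∈ ({v1, v2, v3} : Set E) := by
    intro i; fin_cases i <;> simp
  have := Finset.centerMass_mem_convexHull (Finset.univ : Finset (Fin 3))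
    (w := ![l1, l2, l3]) (z := ![v1, v2, v3])
    (by intro i _; fin_cases i <;> simpa)
    (by simp [Fin.sum_univ_three]; linarith)
    (by intro i _; exact hmem i)
  rwa [Finset.centerMass_eq_of_sum_1 _ _ (by simp [Fin.sum_univ_three]; linarith),
    Fin.sum_univ_three] at this

lemma aux_edge (d r h α t : ℝ) (hr : 0 < r) (hh2 : h ^ 2 = r ^ 2 - d ^ 2 / 4)
    (hhr : h < r) (hα0 : 0 ≤ α) (ht0 : 0 ≤ t) (hth : h ≤ t)
    (h1 : r ^ 2 < α ^ 2 * d ^ 2 + t ^ 2) : r - t ≤ 2 * α * (r - h) := by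
  rcases le_or_gt α (1 / 2) with hc | hc
  · set A := r - 2 * α * (r - h) with hA
    rcases le_or_gt A 0 with hA0 | hA0
    · linarith
    · have hd4 : d ^ 2 = 4 * r ^ 2 - 4 * h ^ 2 := by linarith
      have key2 : r ^ 2 - α ^ 2 * d ^ 2 - A ^ 2 = 4 * α * (r - h) * r * (1 - 2 * α) := by
        rw [hA]; linear_combination (-α ^ 2) * hd4
      have hP : 0 ≤ 4 * α * (r - h) * r * (1 - 2 * α) :=
        mul_nonneg (mul_nonneg (mul_nonneg (by linarith) (by linarith)) hr.le) (by linarith)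
      have hsq : A ^ 2 < t ^ 2 := by nlinarith [key2, h1, hP]
      nlinarith [hsq, ht0, hA0]
  · nlinarith [mul_pos (by linarith : (0:ℝ) < 2 * α - 1) (by linarith : (0:ℝ) < r - h)]

lemma coeffs (d r h α t : ℝ) (hr : 0 < r) (hd0 : 0 < d) (hd2 : d < 2 * r)
    (hh2 : h ^ 2 = r ^ 2 - d ^ 2 / 4) (hh0 : 0 ≤ h)
    (hα0 : 0 ≤ α) (hα1 : α ≤ 1) (ht0 : 0 ≤ t) (htr : t ≤ r)
    (h1 : r ^ 2 < α ^ 2 * d ^ 2 + t ^ 2) (h2 : r ^ 2 < (1 - α) ^ 2 * d ^ 2 + t ^ 2) :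
    ∃ l1 l2 l3 : ℝ, 0 ≤ l1 ∧ 0 ≤ l2 ∧ 0 ≤ l3 ∧
      l1 + l3 / 2 = 1 - α ∧ l2 + l3 / 2 = α ∧ l1 * r + l2 * r + l3 * h = t := by
  have hhr : h < r := by nlinarith
  have hth : h ≤ t := by
    rcases le_or_gt α (1 / 2) with hc | hc
    · have h2t : h ^ 2 < t ^ 2 := by nlinarith [sq_nonneg d, mul_nonneg hα0 hα0]
      nlinarith [h2t, hh0, ht0]
    · have h2t : h ^ 2 < t ^ 2 := by nlinarith [sq_nonneg d]
      nlinarith [h2t, hh0, ht0]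
  set l3 := (r - t) / (r - h) with hl3def
  have hrh : (0:ℝ) < r - h := by linarith
  have hl3 : l3 * (r - h) = r - t := div_mul_cancel₀ _ (by linarith)
  have hl3nn : 0 ≤ l3 := div_nonneg (by linarith) hrh.le
  have hle1 : r - t ≤ 2 * (1 - α) * (r - h) :=
    aux_edge d r h (1 - α) t hr hh2 hhr (by linarith) ht0 hth (by nlinarith [h2])
  have hle2 : r - t ≤ 2 * α * (r - h) := aux_edge d r h α t hr hh2 hhr hα0 ht0 hth h1
  refine ⟨1 - α - l3 / 2, α - l3 / 2, l3, ?_, ?_, hl3nn, by ring, by ring, ?_⟩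
  · have : l3 ≤ 2 * (1 - α) := by
      rw [hl3def, div_le_iff₀ hrh]; linarith
    linarith
  · have : l3 ≤ 2 * α := by
      rw [hl3def, div_le_iff₀ hrh]; linarith
    linarith
  · linear_combination (-1 : ℝ) * hl3

/-- every point of the rectangle R that lies strictly outside both closed
disks of radius r around x and y belongs to the union of the two triangles T⁺ and T⁻. -/
theorem triangles_cover_rectangle_minus_disks
    (x y n : EuclideanSpace ℝ (Fin 2)) (r d h : ℝ) (hr : 0 < r) (hxy : x ≠ y)
    (hd : d = dist x y) (hd0 : 0 < d) (hd2 : d < 2 * r)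
    (hn : ‖n‖ = 1) (hperp : ⟪n, y - x⟫ = 0)
    (hh : h = Real.sqrt (r ^ 2 - d ^ 2 / 4)) :
    ∀ p ∈ convexHull ℝ
        ({x + r • n, x - r • n, y + r • n, y - r • n} :
          Set (EuclideanSpace ℝ (Fin 2))),
      r < dist p x → r < dist p y →
        p ∈ convexHull ℝ
            ({x + r • n, y + r • n, (2 : ℝ)⁻¹ • (x + y) + h • n} :
              Set (EuclideanSpace ℝ (Fin 2))) ∪
          convexHull ℝ
            ({x - r • n, y - r • n, (2 : ℝ)⁻¹ • (x + y) - h • n} :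
              Set (EuclideanSpace ℝ (Fin 2))) := by
  intro p hp hpx hpy
  -- basic facts about h
  have hh0 : 0 ≤ h := hh ▸ Real.sqrt_nonneg _
  have hh2 : h ^ 2 = r ^ 2 - d ^ 2 / 4 := by
    rw [hh]; exact Real.sq_sqrt (by nlinarith)
  -- extract a representation p = (1-α)•x + α•y + t•n
  obtain ⟨α, t, hα0, hα1, htl, htr, hrep⟩ :
      ∃ α t : ℝ, 0 ≤ α ∧ α ≤ 1 ∧ -r ≤ t ∧ t ≤ r ∧
        p = (1 - α) • x + α • y + t • n := by
    rw [convexHull_insert (by exact ⟨_, Set.mem_insert _ _⟩), mem_convexJoin] at hp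
    obtain ⟨a, ha, q, hq, hpq⟩ := hp
    rw [Set.mem_singleton_iff] at ha; subst ha
    rw [convexHull_insert (by exact ⟨_, Set.mem_insert _ _⟩), mem_convexJoin] at hq
    obtain ⟨b, hb, q2, hq2, hqq⟩ := hq
    rw [Set.mem_singleton_iff] at hb; subst hb
    rw [convexHull_pair] at hq2
    obtain ⟨u1, v1, hu1, hv1, huv1, hpeq⟩ := hpq
    obtain ⟨u2, v2, hu2, hv2, huv2, hqeq⟩ := hqq
    obtain ⟨u3, v3, hu3, hv3, huv3, hq2eq⟩ := hq2
    set a1 := u1 with ha1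
    set a2 := v1 * u2 with ha2
    set a3 := v1 * v2 * u3 with ha3
    set a4 := v1 * v2 * v3 with ha4
    have hsum : a1 + a2 + a3 + a4 = 1 := by
      rw [ha1, ha2, ha3, ha4]; linear_combination v1 * v2 * huv3 + v1 * huv2 + huv1
    have h2nn : 0 ≤ a2 := mul_nonneg hv1 hu2
    have h3nn : 0 ≤ a3 := mul_nonneg (mul_nonneg hv1 hv2) hu3
    have h4nn : 0 ≤ a4 := mul_nonneg (mul_nonneg hv1 hv2) hv3
    refine ⟨a3 + a4, (a1 + a3 - a2 - a4) * r, by linarith, by linarith, ?_, ?_, ?_⟩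
    · nlinarith [hr, hu1, h2nn, h3nn, h4nn, hsum]
    · nlinarith [hr, hu1, h2nn, h3nn, h4nn, hsum]
    · rw [← hpeq, ← hqeq, ← hq2eq]
      have h12 : (1 : ℝ) - (a3 + a4) = a1 + a2 := by linarith
      rw [h12, ha1, ha2, ha3, ha4]
      module
  -- distance computations
  have hyx : ‖y - x‖ = d := by rw [hd, dist_eq_norm, norm_sub_rev]
  have hin : ⟪y - x, n⟫ = 0 := by rw [real_inner_comm]; exact hperp
  have hpx2 : dist p x ^ 2 = α ^ 2 * d ^ 2 + t ^ 2 := by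
    have h1 : p - x = α • (y - x) + t • n := by rw [hrep]; module
    rw [dist_eq_norm, h1, norm_add_sq_real, real_inner_smul_left, real_inner_smul_right,
      hin, norm_smul, norm_smul, hyx, hn, Real.norm_eq_abs, Real.norm_eq_abs]
    rw [mul_pow, mul_pow, sq_abs, sq_abs]; ring
  have hpy2 : dist p y ^ 2 = (1 - α) ^ 2 * d ^ 2 + t ^ 2 := by
    have h1 : p - y = (-(1 - α)) • (y - x) + t • n := by rw [hrep]; module
    rw [dist_eq_norm, h1, norm_add_sq_real, real_inner_smul_left, real_inner_smul_right,
      hin, norm_smul, norm_smul, hyx, hn, Real.norm_eq_abs, Real.norm_eq_abs]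
    rw [mul_pow, mul_pow, sq_abs, sq_abs]; ring
  have h1 : r ^ 2 < α ^ 2 * d ^ 2 + t ^ 2 := by nlinarith [hpx, dist_nonneg (x := p) (y := x)]
  have h2 : r ^ 2 < (1 - α) ^ 2 * d ^ 2 + t ^ 2 := by
    nlinarith [hpy, dist_nonneg (x := p) (y := y)]
  rcases le_total 0 t with htpos | htneg
  · -- upper triangle
    obtain ⟨l1, l2, l3, hl1, hl2, hl3, he1, he2, he3⟩ :=
      coeffs d r h α t hr hd0 hd2 hh2 hh0 hα0 hα1 htpos htr h1 h2
    left
    have hpe : p = l1 • (x + r • n) + l2 • (y + r • n) +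
        l3 • ((2 : ℝ)⁻¹ • (x + y) + h • n) := by
      rw [hrep]; match_scalars <;> push_cast <;> linarith
    rw [hpe]
    exact mem_hull3 _ _ _ _ _ _ hl1 hl2 hl3 (by linarith)
  · -- lower triangle
    obtain ⟨l1, l2, l3, hl1, hl2, hl3, he1, he2, he3⟩ :=
      coeffs d r h α (-t) hr hd0 hd2 hh2 hh0 hα0 hα1 (by linarith) (by linarith)
        (by nlinarith [h1]) (by nlinarith [h2])
    right
    have hpe : p = l1 • (x - r • n) + l2 • (y - r • n) +
        l3 • ((2 : ℝ)⁻¹ • (x + y) - h • n) := by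
      rw [hrep]; match_scalars <;> push_cast <;> linarith
    rw [hpe]
    exact mem_hull3 _ _ _ _ _ _ hl1 hl2 hl3 (by linarith)
end

section
/- Let c = (a,b) ∈ ℝ² and r > 0, and let x, y ∈ ℝ². If ψ(x) lies strictly below the plane ρ(c,r) and ψ(y) lies strictly above ρ(c,r), then the segment [x,y] intersects the circle C(c,r) in exactly one point. -/
/-!
The plane `ρ(c,r)` is the lift of the circle `C(c,r)`: the height of `ψ(p)` above `ρ(c,r)` is
`dist p c ^ 2 - r ^ 2`. So the hypotheses say that `x` lies inside the circle and `y` outside it.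
The intermediate value theorem gives a point of `[x,y]` on the circle, and since the distance to
`c` is convex along the segment and starts below `r`, it can take the value `r` only once.
-/

open Set

theorem ConvexOn.eq_of_apply_eq_of_left_lt {f : ℝ → ℝ} {a s t : ℝ} (hf : ConvexOn ℝ (Ici a) f)
    (hs : a ≤ s) (ht : a ≤ t) (has : f a < f s) (hst : f s = f t) : s = t := by
  have key : ∀ {u v : ℝ}, a ≤ u → a ≤ v → f a < f u → u < v → f u < f v :=
    fun hu hv hau huv => hf.lt_right_of_left_lt self_mem_Ici hv
      (Ioo_subset_openSegment ⟨hu.lt_of_ne (by rintro rfl; exact hau.false), huv⟩) hau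
  rcases lt_trichotomy s t with hlt | rfl | hgt
  · exact absurd hst (key hs ht has hlt).ne
  · rfl
  · exact absurd hst.symm (key ht hs (hst ▸ has) hgt).ne

theorem segment_inter_sphere_subsingleton {E : Type*} [NormedAddCommGroup E] [NormedSpace ℝ E]
    {x y c : E} {r : ℝ} (hx : dist x c < r) : (segment ℝ x y ∩ Metric.sphere c r).Subsingleton := by
  have hf : ConvexOn ℝ (Ici 0) fun t : ℝ => dist (AffineMap.lineMap x y t) c :=
    ((convexOn_univ_dist c).comp_affineMap (AffineMap.lineMap x y)).subset (subset_univ _)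
      (convex_Ici 0)
  rw [segment_eq_image_lineMap]
  rintro _ ⟨⟨s, hs, rfl⟩, hsc⟩ _ ⟨⟨t, ht, rfl⟩, htc⟩
  rw [Metric.mem_sphere] at hsc htc
  have hx0 : dist (AffineMap.lineMap x y (0 : ℝ)) c < dist (AffineMap.lineMap x y s) c := by
    simpa [hsc] using hx
  rw [hf.eq_of_apply_eq_of_left_lt hs.1 ht.1 hx0 (hsc.trans htc.symm)]

theorem segment_inter_sphere_nonempty {E : Type*} [NormedAddCommGroup E] [NormedSpace ℝ E]
    {x y c : E} {r : ℝ} (hx : dist x c ≤ r) (hy : r ≤ dist y c) :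
    (segment ℝ x y ∩ Metric.sphere c r).Nonempty := by
  obtain ⟨p, hp, hpc⟩ := (convex_segment x y).isPreconnected.intermediate_value
    (left_mem_segment ℝ x y) (right_mem_segment ℝ x y)
    (continuous_id.dist continuous_const).continuousOn ⟨hx, hy⟩
  exact ⟨p, hp, hpc⟩

theorem EuclideanSpace.lift_sub_plane_eq_dist_sq_sub_sq (c x : EuclideanSpace ℝ (Fin 2)) (r : ℝ) :
    (x 0) ^ 2 + (x 1) ^ 2 - (2 * c 0 * x 0 + 2 * c 1 * x 1 - (c 0) ^ 2 - (c 1) ^ 2 + r ^ 2) =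
      dist x c ^ 2 - r ^ 2 := by
  rw [EuclideanSpace.dist_sq_eq, Fin.sum_univ_two, Real.dist_eq, Real.dist_eq, sq_abs, sq_abs]
  ring

/-- if ψ(x) lies strictly below the plane ρ(c,r) and ψ(y) strictly above it,
then the segment [x,y] intersects the circle C(c,r) in exactly one point. -/
theorem lift_separated_segment_circle_unique_inter
    (c x y : EuclideanSpace ℝ (Fin 2)) (r : ℝ) (hr : 0 < r)
    (hx : (x 0) ^ 2 + (x 1) ^ 2 <
        2 * c 0 * x 0 + 2 * c 1 * x 1 - (c 0) ^ 2 - (c 1) ^ 2 + r ^ 2)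
    (hy : (y 0) ^ 2 + (y 1) ^ 2 >
        2 * c 0 * y 0 + 2 * c 1 * y 1 - (c 0) ^ 2 - (c 1) ^ 2 + r ^ 2) :
    ∃ p : EuclideanSpace ℝ (Fin 2),
      segment ℝ x y ∩ Metric.sphere c r = {p} := by
  have hxc : dist x c < r := (pow_lt_pow_iff_left₀ dist_nonneg hr.le two_ne_zero).1 <| by
    linarith [EuclideanSpace.lift_sub_plane_eq_dist_sq_sub_sq c x r]
  have hyc : r < dist y c := lt_of_pow_lt_pow_left₀ 2 dist_nonneg <| by
    linarith [EuclideanSpace.lift_sub_plane_eq_dist_sq_sub_sq c y r]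
  exact exists_eq_singleton_iff_nonempty_subsingleton.2
    ⟨segment_inter_sphere_nonempty hxc.le hyc.le, segment_inter_sphere_subsingleton hxc⟩
end

section
/- (Correctness of the forward-sweep update.) Let Δ ≥ 0 and a ≤ b be reals, and let A be a finite set of pairs (a',b') of reals with a' ≤ b' for each pair, such that every (a',b') ∈ A satisfies b' < a or a' > b (each interval [a',b'] is disjoint from [a,b]). Suppose the set B = {b' : (a',b') ∈ A and b' < a} is nonempty and let b* = max B. Then for every l ∈ [a,b], the following are equivalent: (1) there exist (a',b') ∈ A and l' ∈ [a',b'] with l − Δ ≤ l' ≤ l; (2) l ≤ b* + Δ. -/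
section ReachesWithin

variable {α : Type*} [AddCommGroup α] [LinearOrder α] {Δ a b l : α} {p : α × α}

/-- `l` is reached from some point of the interval `[p.1, p.2]` by moving forward by at most `Δ`. -/
def ReachesWithin (Δ : α) (p : α × α) (l : α) : Prop :=
  ∃ l', p.1 ≤ l' ∧ l' ≤ p.2 ∧ l - Δ ≤ l' ∧ l' ≤ l

theorem ReachesWithin.fst_le (h : ReachesWithin Δ p l) : p.1 ≤ l := by
  obtain ⟨l', h₁, -, -, h₄⟩ := h
  exact h₁.trans h₄

theorem ReachesWithin.sub_le_snd (h : ReachesWithin Δ p l) : l - Δ ≤ p.2 := by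
  obtain ⟨l', -, h₂, h₃, -⟩ := h
  exact h₃.trans h₂

/-- An interval lying before `l` reaches it best from its right endpoint. -/
theorem reachesWithin_iff_of_snd_le (hp : p.1 ≤ p.2) (hpl : p.2 ≤ l) :
    ReachesWithin Δ p l ↔ l - Δ ≤ p.2 :=
  ⟨ReachesWithin.sub_le_snd, fun h => ⟨p.2, hp, le_rfl, h, hpl⟩⟩

theorem reachesWithin_iff_of_disjoint (hp : p.1 ≤ p.2) (hdisj : p.2 < a ∨ b < p.1)
    (hal : a ≤ l) (hlb : l ≤ b) : ReachesWithin Δ p l ↔ p.2 < a ∧ l - Δ ≤ p.2 := by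
  constructor
  · intro h
    exact ⟨hdisj.resolve_right (h.fst_le.trans hlb).not_gt, h.sub_le_snd⟩
  · rintro ⟨hpa, h⟩
    exact (reachesWithin_iff_of_snd_le hp (hpa.le.trans hal)).2 h

end ReachesWithin

theorem forward_sweep_update_correct_general
    (Δ a b : ℝ)
    (A : Finset (ℝ × ℝ)) (hA : ∀ p ∈ A, p.1 ≤ p.2)
    (hdisj : ∀ p ∈ A, p.2 < a ∨ b < p.1)
    (hB : ((A.filter fun p => p.2 < a).image Prod.snd).Nonempty) :
    ∀ l : ℝ, a ≤ l → l ≤ b →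
      ((∃ p ∈ A, ∃ l' : ℝ, p.1 ≤ l' ∧ l' ≤ p.2 ∧ l - Δ ≤ l' ∧ l' ≤ l) ↔
        l ≤ Finset.max' _ hB + Δ) := by
  intro l hal hlb
  calc (∃ p ∈ A, ReachesWithin Δ p l)
      ↔ ∃ p ∈ A.filter fun p => p.2 < a, l - Δ ≤ p.2 := by
        simp only [Finset.mem_filter, and_assoc]
        exact exists_congr fun p => and_congr_right fun hp =>
          reachesWithin_iff_of_disjoint (hA p hp) (hdisj p hp) hal hlb
    _ ↔ l - Δ ≤ Finset.max' _ hB := by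
        rw [Finset.max'_eq_sup', Finset.sup'_image, Finset.le_sup'_iff]
        rfl
    _ ↔ l ≤ Finset.max' _ hB + Δ := sub_le_iff_le_add

/-- correctness of the forward-sweep update. For an interval [a,b] and a
finite family A of closed intervals each disjoint from [a,b], with
B = {b' : (a',b') ∈ A, b' < a} nonempty and b* = max B, a point l ∈ [a,b] can be reached
from some point of some interval of A within forward travel budget Δ iff l ≤ b* + Δ. -/
theorem forward_sweep_update_correct
    (Δ a b : ℝ) (hΔ : 0 ≤ Δ) (hab : a ≤ b)
    (A : Finset (ℝ × ℝ)) (hA : ∀ p ∈ A, p.1 ≤ p.2)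
    (hdisj : ∀ p ∈ A, p.2 < a ∨ b < p.1)
    (hB : ((A.filter fun p => p.2 < a).image Prod.snd).Nonempty) :
    ∀ l : ℝ, a ≤ l → l ≤ b →
      ((∃ p ∈ A, ∃ l' : ℝ, p.1 ≤ l' ∧ l' ≤ p.2 ∧ l - Δ ≤ l' ∧ l' ≤ l) ↔
        l ≤ Finset.max' _ hB + Δ) :=
  forward_sweep_update_correct_general Δ a b A hA hdisj hB
end

section
/- (Every surviving location extends to a feasible sequence.) Let k ∈ ℕ, let S : ℕ → Set ℝ and Δ : ℕ → ℝ with Δ i ≥ 0 for all i. Assume that for every i < k: (forward reachability) for every l ∈ S i there exists l' ∈ S (i+1) with l ≤ l' ≤ l + Δ i, and (backward reachability) for every l ∈ S (i+1) there exists l' ∈ S i with l' ≤ l ≤ l' + Δ i. Then for every j ≤ k and every x ∈ S j there exists a function f : ℕ → ℝ with f j = x, f i ∈ S i for all i ≤ k, and f i ≤ f (i+1) ≤ f i + Δ i for all i < k. -/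
open Classical in
noncomputable def fwdSeq (k j : ℕ) (S : ℕ → Set ℝ) (Δ : ℕ → ℝ)
    (hfwd : ∀ i < k, ∀ l ∈ S i, ∃ l' ∈ S (i + 1), l ≤ l' ∧ l' ≤ l + Δ i)
    (x : ℝ) : ℕ → ℝ
  | 0 => x
  | n + 1 =>
    let y := fwdSeq k j S Δ hfwd x n
    if h : j + n < k ∧ y ∈ S (j + n) then Classical.choose (hfwd (j + n) h.1 y h.2) else y

open Classical in
noncomputable def bwdSeq (k j : ℕ) (S : ℕ → Set ℝ) (Δ : ℕ → ℝ)
    (hbwd : ∀ i < k, ∀ l ∈ S (i + 1), ∃ l' ∈ S i, l' ≤ l ∧ l ≤ l' + Δ i)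
    (x : ℝ) : ℕ → ℝ
  | 0 => x
  | m + 1 =>
    let y := bwdSeq k j S Δ hbwd x m
    if h : j - (m + 1) < k ∧ j - (m + 1) + 1 = j - m ∧ y ∈ S (j - (m + 1) + 1) then
      Classical.choose (hbwd (j - (m + 1)) h.1 y h.2.2) else y

/-- every surviving location extends to a feasible sequence. Under forward
and backward reachability between consecutive location sets, every x ∈ S j (j ≤ k) is
part of some feasible mapping sequence. -/
theorem surviving_location_extends
    (k : ℕ) (S : ℕ → Set ℝ) (Δ : ℕ → ℝ) (hΔ : ∀ i, 0 ≤ Δ i)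
    (hfwd : ∀ i < k, ∀ l ∈ S i, ∃ l' ∈ S (i + 1), l ≤ l' ∧ l' ≤ l + Δ i)
    (hbwd : ∀ i < k, ∀ l ∈ S (i + 1), ∃ l' ∈ S i, l' ≤ l ∧ l ≤ l' + Δ i) :
    ∀ j ≤ k, ∀ x ∈ S j, ∃ f : ℕ → ℝ, f j = x ∧ (∀ i ≤ k, f i ∈ S i) ∧
      ∀ i < k, f i ≤ f (i + 1) ∧ f (i + 1) ≤ f i + Δ i := by
  intro j hj x hx
  set g := fwdSeq k j S Δ hfwd x with hgdef
  set b := bwdSeq k j S Δ hbwd x with hbdef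
  have hg : ∀ n, j + n ≤ k → g n ∈ S (j + n) := by
    intro n
    induction n with
    | zero => intro _; simpa [hgdef, fwdSeq] using hx
    | succ n ih =>
      intro hn
      have hlt : j + n < k := by omega
      have hmem : g n ∈ S (j + n) := ih (by omega)
      have : g (n + 1) = Classical.choose (hfwd (j + n) hlt (g n) hmem) := by
        simp only [hgdef, fwdSeq]
        rw [dif_pos ⟨hlt, hmem⟩]
      rw [this]
      have hs := Classical.choose_spec (hfwd (j + n) hlt (g n) hmem)
      exact hs.1
  have hgstep : ∀ n, j + n < k →
      g n ≤ g (n + 1) ∧ g (n + 1) ≤ g n + Δ (j + n) := by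
    intro n hn
    have hmem : g n ∈ S (j + n) := hg n (by omega)
    have heq : g (n + 1) = Classical.choose (hfwd (j + n) hn (g n) hmem) := by
      simp only [hgdef, fwdSeq]
      rw [dif_pos ⟨hn, hmem⟩]
    have hs := Classical.choose_spec (hfwd (j + n) hn (g n) hmem)
    rw [heq]
    exact ⟨hs.2.1, hs.2.2⟩
  have hb : ∀ m, m ≤ j → b m ∈ S (j - m) := by
    intro m
    induction m with
    | zero => intro _; simpa [hbdef, bwdSeq] using hx
    | succ m ih =>
      intro hm
      have hmem0 : b m ∈ S (j - m) := ih (by omega)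
      have h1 : j - (m + 1) < k := by omega
      have h2 : j - (m + 1) + 1 = j - m := by omega
      have hmem : b m ∈ S (j - (m + 1) + 1) := by rw [h2]; exact hmem0
      have heq : b (m + 1) = Classical.choose (hbwd (j - (m + 1)) h1 (b m) hmem) := by
        simp only [hbdef, bwdSeq]
        rw [dif_pos ⟨h1, h2, hmem⟩]
      rw [heq]
      exact (Classical.choose_spec (hbwd (j - (m + 1)) h1 (b m) hmem)).1
  have hbstep : ∀ m, m + 1 ≤ j →
      b (m + 1) ≤ b m ∧ b m ≤ b (m + 1) + Δ (j - (m + 1)) := by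
    intro m hm
    have hmem0 : b m ∈ S (j - m) := hb m (by omega)
    have h1 : j - (m + 1) < k := by omega
    have h2 : j - (m + 1) + 1 = j - m := by omega
    have hmem : b m ∈ S (j - (m + 1) + 1) := by rw [h2]; exact hmem0
    have heq : b (m + 1) = Classical.choose (hbwd (j - (m + 1)) h1 (b m) hmem) := by
      simp only [hbdef, bwdSeq]
      rw [dif_pos ⟨h1, h2, hmem⟩]
    have hs := Classical.choose_spec (hbwd (j - (m + 1)) h1 (b m) hmem)
    rw [heq]
    exact ⟨hs.2.1, hs.2.2⟩
  have hb0 : b 0 = x := by simp [hbdef, bwdSeq]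
  have hg0 : g 0 = x := by simp [hgdef, fwdSeq]
  refine ⟨fun i => if i ≤ j then b (j - i) else g (i - j), ?_, ?_, ?_⟩
  · simp [hb0]
  · intro i hi
    by_cases h : i ≤ j
    · simp only [if_pos h]
      have := hb (j - i) (by omega)
      have he : j - (j - i) = i := by omega
      rwa [he] at this
    · simp only [if_neg h]
      have := hg (i - j) (by omega)
      have he : j + (i - j) = i := by omega
      rwa [he] at this
  · intro i hi
    by_cases h : i + 1 ≤ j
    · have h1 : i ≤ j := by omega
      simp only [if_pos h, if_pos h1]
      have hstep := hbstep (j - (i + 1)) (by omega)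
      have e1 : j - (i + 1) + 1 = j - i := by omega
      have e3 : j - (j - i) = i := by omega
      rw [e1, e3] at hstep
      exact hstep
    · -- i ≥ j
      have hij : j ≤ i := by omega
      have h2 : ¬ (i + 1 ≤ j) := h
      have hfi : (if i ≤ j then b (j - i) else g (i - j)) = g (i - j) := by
        by_cases hij' : i ≤ j
        · have : i = j := by omega
          subst this
          simp [hb0, hg0]
        · simp [hij']
      have hfi1 : (if i + 1 ≤ j then b (j - (i + 1)) else g (i + 1 - j)) = g (i - j + 1) := by
        rw [if_neg h2]
        congr 1
        omega
      dsimp only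
      rw [hfi, hfi1]
      have hstep := hgstep (i - j) (by omega)
      have he : j + (i - j) = i := by omega
      rw [he] at hstep
      exact hstep
end
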